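/- arXiv:1809.01538 — 7 statements merged into one kernel-verified Lean document; each statement's English description precedes it below -/
import Mathlib

section
/- The spectral radius of the next-generation matrix FV⁻¹, where F = [[0, φ_w(K - Q*)(1-ρ₂)/K],[0,0]] and V = [[μ_a+ψ, 0],[-ψ/2, μ_w]], with Q* = K(1 - 1/R_{0w̄}), equals φ_w μ_w̄ (1-ρ₂)/(φ_w̄ μ_w). -/
/-!
Since `F` has a single nonzero entry in its first row, `F V⁻¹` has the shape `!![a, b; 0, 0]`, whose
characteristic polynomial is `X (X - a)`; the spectral radius is therefore `|a| = a`. Evaluating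
`a` uses `K - Q* = K / R_{0w̄}`, after which the factors `ψ / 2` and `μ_a + ψ` of `R_{0w̄}` cancel
against those of `V⁻¹`.
-/

open Polynomial Matrix

namespace Matrix

theorem charpoly_fin_two_of_row_zero {R : Type*} [CommRing R] [Nontrivial R] (a b : R) :
    (!![a, b; 0, 0] : Matrix (Fin 2) (Fin 2) R).charpoly = X * (X - C a) := by
  rw [charpoly_fin_two, trace_fin_two_of, det_fin_two_of]
  simp only [add_zero, mul_zero, sub_zero, map_zero]
  ring

theorem nilpotent_mul_inv_lower_fin_two {K : Type*} [Field K] (c p q s : K) (hp : p ≠ 0)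
    (hs : s ≠ 0) :
    !![0, c; 0, 0] * (!![p, 0; q, s])⁻¹ = !![-(c * q) / (p * s), c / s; 0, 0] := by
  rw [inv_def, det_fin_two_of, adjugate_fin_two_of, Ring.inverse_eq_inv']
  ext i j
  fin_cases i <;> fin_cases j <;> simp <;> field_simp

def complexEigenvalueNorms {n : Type*} [Fintype n] [DecidableEq n] (M : Matrix n n ℝ) : Set ℝ :=
  {r | ∃ z : ℂ, (M.map Complex.ofReal).charpoly.eval z = 0 ∧ r = ‖z‖}

theorem isGreatest_complexEigenvalueNorms_fin_two_of_row_zero {a : ℝ} (ha : 0 ≤ a) (b : ℝ) :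
    IsGreatest (complexEigenvalueNorms !![a, b; 0, 0]) a := by
  have hmap : (!![a, b; 0, 0]).map Complex.ofReal = !![(a : ℂ), b; 0, 0] := by
    ext i j; fin_cases i <;> fin_cases j <;> simp
  have hnorm : ‖(a : ℂ)‖ = a := by rw [Complex.norm_real, Real.norm_of_nonneg ha]
  simp only [complexEigenvalueNorms, hmap, charpoly_fin_two_of_row_zero, eval_mul, eval_X,
    eval_sub, eval_C, mul_eq_zero, sub_eq_zero]
  refine ⟨⟨a, Or.inr rfl, hnorm.symm⟩, ?_⟩
  rintro r ⟨z, rfl | rfl, rfl⟩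
  · simpa using ha
  · exact hnorm.le

end Matrix

theorem stmt_1_general (φwb φw ψ μa μwb μw K ρ2 : ℝ)
    (hφwb : 0 < φwb) (hφw : 0 < φw) (hψ : 0 < ψ) (hμa : 0 < μa)
    (hμwb : 0 < μwb) (hμw : 0 < μw) (hK : 0 < K)
    (hρ2 : ρ2 ∈ Set.Ico (0:ℝ) 1)
    (R0wb : ℝ) (hR0wb : R0wb = φwb * ψ / (2 * μwb * (μa + ψ)))
    (Qs : ℝ) (hQs : Qs = K * (1 - 1 / R0wb))
    (F V : Matrix (Fin 2) (Fin 2) ℝ)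
    (hF : F = !![0, φw * (K - Qs) * (1 - ρ2) / K; 0, 0])
    (hV : V = !![μa + ψ, 0; -(ψ / 2), μw]) :
    IsGreatest {r : ℝ | ∃ z : ℂ,
        ((F * V⁻¹).map (Complex.ofReal)).charpoly.eval z = 0 ∧ r = ‖z‖}
      (φw * μwb * (1 - ρ2) / (φwb * μw)) := by
  have hμaψ : 0 < μa + ψ := add_pos hμa hψ
  have hρ2' : 0 ≤ 1 - ρ2 := sub_nonneg.mpr hρ2.2.le
  have hentry : -(φw * (K - Qs) * (1 - ρ2) / K * -(ψ / 2)) / ((μa + ψ) * μw)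
      = φw * μwb * (1 - ρ2) / (φwb * μw) := by
    subst hQs hR0wb
    field_simp
    ring
  rw [hF, hV, nilpotent_mul_inv_lower_fin_two _ _ _ _ hμaψ.ne' hμw.ne', hentry]
  exact isGreatest_complexEigenvalueNorms_fin_two_of_row_zero (by positivity) _

/-- The spectral radius (maximum absolute value of the complex eigenvalues) of
the next-generation matrix `F V⁻¹` equals `φ_w μ_w̄ (1-ρ₂)/(φ_w̄ μ_w)`. -/
theorem stmt_1 (φwb φw ψ μa μwb μw K ρ2 : ℝ)
    (hφwb : 0 < φwb) (hφw : 0 < φw) (hψ : 0 < ψ) (hμa : 0 < μa)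
    (hμwb : 0 < μwb) (hμw : 0 < μw) (hK : 0 < K)
    (hρ2 : ρ2 ∈ Set.Ico (0:ℝ) 1)
    (R0wb : ℝ) (hR0wb : R0wb = φwb * ψ / (2 * μwb * (μa + ψ))) (hR : 1 < R0wb)
    (Qs : ℝ) (hQs : Qs = K * (1 - 1 / R0wb))
    (F V : Matrix (Fin 2) (Fin 2) ℝ)
    (hF : F = !![0, φw * (K - Qs) * (1 - ρ2) / K; 0, 0])
    (hV : V = !![μa + ψ, 0; -(ψ / 2), μw]) :
    IsGreatest {r : ℝ | ∃ z : ℂ,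
        ((F * V⁻¹).map (Complex.ofReal)).charpoly.eval z = 0 ∧ r = ‖z‖}
      (φw * μwb * (1 - ρ2) / (φwb * μw)) :=
  stmt_1_general φwb φw ψ μa μwb μw K ρ2 hφwb hφw hψ hμa hμwb hμw hK hρ2 R0wb hR0wb Qs hQs F V hF hV
end

section
/- For the quadratic λ² + a₁λ + a₂ with a₁ = (2μ_w̄² + φ_w̄ ψ)/(2μ_w̄) and a₂ = μ_w̄(μ_a+ψ)(R_{0w̄} - 1), both roots have negative real parts if and only if R_{0w̄} > 1. -/
/-- Both roots of `λ² + a₁λ + a₂` have negative real parts iff `R_{0w̄} > 1`. -/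
theorem stmt_4 (μwb φwb ψ μa : ℝ)
    (hμwb : 0 < μwb) (hφwb : 0 < φwb) (hψ : 0 < ψ) (hμa : 0 < μa)
    (R0wb a1 a2 : ℝ)
    (hR0wb : R0wb = φwb * ψ / (2 * μwb * (μa + ψ)))
    (ha1 : a1 = (2 * μwb ^ 2 + φwb * ψ) / (2 * μwb))
    (ha2 : a2 = μwb * (μa + ψ) * (R0wb - 1)) :
    (∀ z : ℂ, z ^ 2 + (a1 : ℂ) * z + (a2 : ℂ) = 0 → z.re < 0) ↔ 1 < R0wb := by
  have ha1pos : 0 < a1 := by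
    rw [ha1]; positivity
  constructor
  · intro h
    by_contra hle
    push_neg at hle
    have ha2le : a2 ≤ 0 := by
      rw [ha2]
      have : 0 < μwb * (μa + ψ) := by positivity
      nlinarith
    set d := a1 ^ 2 - 4 * a2 with hd
    have hdnn : 0 ≤ d := by nlinarith
    set s := Real.sqrt d with hs
    have hs2 : s ^ 2 = d := Real.sq_sqrt hdnn
    have hsge : a1 ≤ s := by
      have : Real.sqrt (a1 ^ 2) ≤ s := Real.sqrt_le_sqrt (by nlinarith)
      rwa [Real.sqrt_sq ha1pos.le] at this
    set x := (-a1 + s) / 2 with hx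
    have hxnn : 0 ≤ x := by rw [hx]; linarith
    have hroot : x ^ 2 + a1 * x + a2 = 0 := by
      rw [hx]; nlinarith [hs2]
    have := h (x : ℂ) (by push_cast; exact_mod_cast congrArg (Complex.ofReal) hroot)
    simp at this
    linarith
  · intro hR z hz
    have ha2pos : 0 < a2 := by
      rw [ha2]
      have : 0 < μwb * (μa + ψ) := by positivity
      nlinarith
    have hre := congrArg Complex.re hz
    have him := congrArg Complex.im hz
    simp [pow_two, Complex.mul_re, Complex.mul_im] at hre him
    by_contra hge
    push_neg at hge
    rcases mul_eq_zero.mp (show z.im * (2 * z.re + a1) = 0 by linarith) with hy | hxy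
    · rw [hy] at hre
      nlinarith
    · have : z.re = -a1 / 2 := by linarith
      linarith
end

section
/- The characteristic polynomial of the Jacobian J(E₂) in equation (22) factors as (λ² + a₁λ + a₂)(λ² + b₁λ + b₂) where a₁ = (2μ_w̄² + φ_w̄ψ)/(2μ_w̄), a₂ = μ_w̄(μ_a+ψ)(R_{0w̄}-1), b₁ = μ_a+ψ+μ_w, b₂ = μ_w(μ_a+ψ)(1 - R_{0w|w̄}). -/
open Polynomial

theorem det_fin_four_of {R : Type*} [CommRing R]
    (a b c d e f g h i j k l m n o p : R) :
    Matrix.det !![a,b,c,d; e,f,g,h; i,j,k,l; m,n,o,p] =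
      a * (f * (k * p - l * o) - g * (j * p - l * n) + h * (j * o - k * n))
    - b * (e * (k * p - l * o) - g * (i * p - l * m) + h * (i * o - k * m))
    + c * (e * (j * p - l * n) - f * (i * p - l * m) + h * (i * n - j * m))
    - d * (e * (j * o - k * n) - f * (i * o - k * m) + g * (i * n - j * m)) := by
  rw [Matrix.det_succ_row_zero, Fin.sum_univ_four]
  simp [Matrix.det_fin_three, Fin.succAbove, Fin.lt_def, show ((3:Fin 4):ℕ) = 3 from rfl,
    show ((2:Fin 3):ℕ) = 2 from rfl, show ((1:Fin 3):ℕ) = 1 from rfl,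
    show (Fin.castSucc 2 : Fin 4) = 2 from rfl, show (Fin.succ 2 : Fin 4) = 3 from rfl]
  ring

set_option maxHeartbeats 1600000 in
/-- The characteristic polynomial of the Jacobian `J(E₂)` factors as
`(λ² + a₁λ + a₂)(λ² + b₁λ + b₂)`. -/
theorem stmt_5 (μa ψ μwb μw φwb φw ρ2 : ℝ)
    (hμa : 0 < μa) (hψ : 0 < ψ) (hμwb : 0 < μwb) (hμw : 0 < μw)
    (hφwb : 0 < φwb) (hφw : 0 < φw) (hρ2 : ρ2 ∈ Set.Icc (0:ℝ) 1)
    (R0wb R0wwb a1 a2 b1 b2 : ℝ)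
    (hR0wb : R0wb = φwb * ψ / (2 * μwb * (μa + ψ)))
    (hR0wwb : R0wwb = φw * μwb * (1 - ρ2) / (φwb * μw))
    (ha1 : a1 = (2 * μwb ^ 2 + φwb * ψ) / (2 * μwb))
    (ha2 : a2 = μwb * (μa + ψ) * (R0wb - 1))
    (hb1 : b1 = μa + ψ + μw)
    (hb2 : b2 = μw * (μa + ψ) * (1 - R0wwb))
    (J : Matrix (Fin 4) (Fin 4) ℝ)
    (hJ : J = !![-(μa + ψ) * R0wb, (μa + ψ) * (1 - R0wb), φwb / R0wb,
                  (ρ2 * φw - φwb) / R0wb;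
                 0, -(μa + ψ), 0, φw * (1 - ρ2) / R0wb;
                 ψ / 2, 0, -μwb, 0;
                 0, ψ / 2, 0, -μw]) :
    J.charpoly = (X ^ 2 + C a1 * X + C a2) * (X ^ 2 + C b1 * X + C b2) := by
  have hψ' : ψ ≠ 0 := ne_of_gt hψ
  have hφwb' : φwb ≠ 0 := ne_of_gt hφwb
  have hμwb' : μwb ≠ 0 := ne_of_gt hμwb
  have hμw' : μw ≠ 0 := ne_of_gt hμw
  have hμaψ : μa + ψ ≠ 0 := by positivity
  apply Polynomial.funext
  intro x
  rw [Matrix.charpoly, ← Polynomial.coe_evalRingHom, RingHom.map_det,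
    RingHom.mapMatrix_apply]
  have hmap : (Matrix.charmatrix J).map (Polynomial.evalRingHom x) =
      !![x + φwb * ψ / (2 * μwb), -((μa + ψ) - φwb * ψ / (2 * μwb)),
          -(2 * μwb * (μa + ψ) / ψ),
          -((ρ2 * φw - φwb) * (2 * μwb * (μa + ψ)) / (φwb * ψ));
         0, x + (μa + ψ), 0, -(φw * (1 - ρ2) * (2 * μwb * (μa + ψ)) / (φwb * ψ));
         -(ψ / 2), 0, x + μwb, 0;
         0, -(ψ / 2), 0, x + μw] := by
    subst hJ hR0wb
    ext i j
    fin_cases i <;> fin_cases j <;>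
      first
        | (simp [Matrix.charmatrix_apply, Matrix.one_apply]; field_simp; ring)
        | (simp [Matrix.charmatrix_apply, Matrix.one_apply]; field_simp)
        | (simp [Matrix.charmatrix_apply, Matrix.one_apply]; ring)
        | simp [Matrix.charmatrix_apply, Matrix.one_apply]
  rw [hmap, det_fin_four_of]
  subst hR0wb hR0wwb ha1 ha2 hb1 hb2
  simp only [coe_evalRingHom, eval_mul, eval_add, eval_pow, eval_X, eval_C]
  field_simp
  ring
end

section
/- All eigenvalues of the 4×4 matrix J(E₂) have negative real parts if and only if R_{0w̄} > 1 and R_{0w|w̄} < 1. -/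
/-!
The plane spanned by the first and third coordinates is invariant under `J`, so `J` is block
upper triangular after reordering the coordinates, and its characteristic polynomial is the
product of those of the diagonal blocks `!![-(μa+ψ) R0wb, φwb / R0wb; ψ/2, -μwb]` and
`!![-(μa+ψ), φw (1-ρ2) / R0wb; ψ/2, -μw]`. Both blocks have negative trace, and a real `2 × 2`
matrix with negative trace has all its eigenvalues in the open left half-plane iff its
determinant is positive. Using the definitions of the reproduction numbers, the two determinants
are `(μa+ψ) μwb (R0wb - 1)` and `(μa+ψ) μw (1 - R0wwb)`.
-/

open Polynomial

theorem Matrix.charpoly_fin_four_eq_mul_charpoly_blocks {R : Type*} [CommRing R]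
    (a b c d f h i k n p : R) :
    (!![a, b, c, d; 0, f, 0, h; i, 0, k, 0; 0, n, 0, p]).charpoly =
      (!![a, c; i, k]).charpoly * (!![f, h; n, p]).charpoly := by
  let e : Fin 2 ⊕ Fin 2 ≃ Fin 4 := finSumFinEquiv.trans (Equiv.swap 1 2)
  have hblocks : !![a, b, c, d; 0, f, 0, h; i, 0, k, 0; 0, n, 0, p] =
      reindex e e (fromBlocks !![a, c; i, k] !![b, d; 0, 0] 0 !![f, h; n, p]) := by
    ext r s
    fin_cases r <;> fin_cases s <;> rfl
  rw [hblocks, charpoly_reindex, charpoly_fromBlocks_zero₂₁]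

theorem quadratic_roots_re_neg_iff {s d : ℝ} (hs : s < 0) :
    (∀ z : ℂ, z ^ 2 - s * z + d = 0 → z.re < 0) ↔ 0 < d := by
  constructor
  · intro h
    by_contra! hd
    -- for `d ≤ 0` the larger root `(s + √(s² - 4d)) / 2` is real and nonnegative
    set r := √(s ^ 2 - 4 * d)
    have hsr : -s ≤ r := Real.le_sqrt_of_sq_le (by linarith)
    have hroot : ((s + r) / 2) ^ 2 - s * ((s + r) / 2) + d = 0 := by
      linear_combination Real.sq_sqrt (show 0 ≤ s ^ 2 - 4 * d by nlinarith) / 4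
    have := h ((s + r) / 2 : ℝ) (by exact_mod_cast hroot)
    rw [Complex.ofReal_re] at this
    linarith
  · intro hd z hz
    by_contra! hre
    have hz_re := congrArg Complex.re hz
    have hz_im := congrArg Complex.im hz
    simp only [pow_two, Complex.add_re, Complex.sub_re, Complex.mul_re, Complex.ofReal_re,
      Complex.ofReal_im, zero_mul, sub_zero, Complex.zero_re, Complex.add_im, Complex.sub_im,
      Complex.mul_im, add_zero, Complex.zero_im] at hz_re hz_im
    have him : z.im = 0 := by
      have : z.im * (2 * z.re - s) = 0 := by linear_combination hz_im
      exact (mul_eq_zero.mp this).resolve_right (by linarith)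
    rw [him] at hz_re
    nlinarith

theorem Matrix.charpoly_roots_re_neg_iff_det_pos (M : Matrix (Fin 2) (Fin 2) ℝ)
    (hM : M.trace < 0) :
    (∀ z : ℂ, (M.charpoly.map Complex.ofRealHom).eval z = 0 → z.re < 0) ↔ 0 < M.det := by
  rw [charpoly_fin_two, ← quadratic_roots_re_neg_iff hM]
  simp

theorem stmt_6_general (μa ψ μwb μw φwb φw ρ2 : ℝ)
    (hμa : 0 < μa) (hψ : 0 < ψ) (hμwb : 0 < μwb) (hμw : 0 < μw)
    (hφwb : 0 < φwb)
    (R0wb R0wwb : ℝ)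
    (hR0wb : R0wb = φwb * ψ / (2 * μwb * (μa + ψ)))
    (hR0wwb : R0wwb = φw * μwb * (1 - ρ2) / (φwb * μw))
    (J : Matrix (Fin 4) (Fin 4) ℝ)
    (hJ : J = !![-(μa + ψ) * R0wb, (μa + ψ) * (1 - R0wb), φwb / R0wb,
                  (ρ2 * φw - φwb) / R0wb;
                 0, -(μa + ψ), 0, φw * (1 - ρ2) / R0wb;
                 ψ / 2, 0, -μwb, 0;
                 0, ψ / 2, 0, -μw]) :
    (∀ z : ℂ, (J.map (Complex.ofReal)).charpoly.eval z = 0 → z.re < 0) ↔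
      (1 < R0wb ∧ R0wwb < 1) := by
  have hR : 0 < R0wb := by rw [hR0wb]; positivity
  rw [show J.map Complex.ofReal = J.map Complex.ofRealHom from rfl, Matrix.charpoly_map, hJ,
    Matrix.charpoly_fin_four_eq_mul_charpoly_blocks]
  simp only [Polynomial.map_mul, eval_mul, mul_eq_zero, or_imp, forall_and]
  rw [Matrix.charpoly_roots_re_neg_iff_det_pos _
      (by rw [Matrix.trace_fin_two_of]; nlinarith [mul_pos (add_pos hμa hψ) hR]),
    Matrix.charpoly_roots_re_neg_iff_det_pos _ (by rw [Matrix.trace_fin_two_of]; linarith),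
    Matrix.det_fin_two_of, Matrix.det_fin_two_of]
  have hdet₁ : -(μa + ψ) * R0wb * -μwb - φwb / R0wb * (ψ / 2) = (μa + ψ) * μwb * (R0wb - 1) := by
    rw [hR0wb]; field_simp
  have hdet₂ : -(μa + ψ) * -μw - φw * (1 - ρ2) / R0wb * (ψ / 2) = (μa + ψ) * μw * (1 - R0wwb) := by
    rw [hR0wb, hR0wwb]; field_simp
  rw [hdet₁, hdet₂, mul_pos_iff_of_pos_left (by positivity),
    mul_pos_iff_of_pos_left (by positivity), sub_pos, sub_pos]

/-- All eigenvalues of `J(E₂)` have negative real parts iff `R_{0w̄} > 1` and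
`R_{0w|w̄} < 1`. Eigenvalues are the complex roots of the characteristic
polynomial. -/
theorem stmt_6 (μa ψ μwb μw φwb φw ρ2 : ℝ)
    (hμa : 0 < μa) (hψ : 0 < ψ) (hμwb : 0 < μwb) (hμw : 0 < μw)
    (hφwb : 0 < φwb) (hφw : 0 < φw) (hρ2 : ρ2 ∈ Set.Ico (0:ℝ) 1)
    (R0wb R0wwb : ℝ)
    (hR0wb : R0wb = φwb * ψ / (2 * μwb * (μa + ψ)))
    (hR0wwb : R0wwb = φw * μwb * (1 - ρ2) / (φwb * μw))
    (J : Matrix (Fin 4) (Fin 4) ℝ)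
    (hJ : J = !![-(μa + ψ) * R0wb, (μa + ψ) * (1 - R0wb), φwb / R0wb,
                  (ρ2 * φw - φwb) / R0wb;
                 0, -(μa + ψ), 0, φw * (1 - ρ2) / R0wb;
                 ψ / 2, 0, -μwb, 0;
                 0, ψ / 2, 0, -μw]) :
    (∀ z : ℂ, (J.map (Complex.ofReal)).charpoly.eval z = 0 → z.re < 0) ↔
      (1 < R0wb ∧ R0wwb < 1) :=
  stmt_6_general μa ψ μwb μw φwb φw ρ2 hμa hψ hμwb hμw hφwb R0wb R0wwb hR0wb hR0wwb J hJ
end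

section
/- All eigenvalues of the 4×4 matrix J(E₃) given in equation (29) have negative real parts if R_{0w} > 1 and μ_w̄ > ρ₂ μ_w. -/
/-!
Clearing denominators in the definition of `R_{0w}` gives `(φ_w / R_{0w}) ψ = 2 μ_w (μ_a + ψ)`,
and with this relation the characteristic polynomial of `J(E₃)` splits into the two monic
quadratics `λ² + c₁λ + c₂` and `λ² + d₁λ + d₂`. Their coefficients are positive exactly when
`R_{0w} > 1` and `μ_w̄ > ρ₂ μ_w`, and a monic real quadratic with positive coefficients has all
its complex roots in the open left half-plane.
-/

open Polynomial

theorem re_neg_of_sq_add_mul_add_eq_zero {a b : ℝ} (ha : 0 < a) (hb : 0 < b) {z : ℂ}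
    (h : z ^ 2 + a * z + b = 0) : z.re < 0 := by
  have hre := congrArg Complex.re h
  have him := congrArg Complex.im h
  simp only [pow_two, Complex.add_re, Complex.add_im, Complex.mul_re, Complex.mul_im,
    Complex.ofReal_re, Complex.ofReal_im, Complex.zero_re, Complex.zero_im] at hre him
  -- Either `z` is real, or the imaginary part of the equation forces `2 re z = -a`.
  rcases mul_eq_zero.1 (show z.im * (2 * z.re + a) = 0 by linarith) with hreal | hcentre
  · rw [hreal] at hre
    nlinarith
  · linarith

noncomputable def jacobianE3 (μa ψ μwb μw φw ρ2 R0w : ℝ) : Matrix (Fin 4) (Fin 4) ℝ :=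
  !![-(μa + ψ), 0, ρ2 * φw / R0w, 0;
     (μa + ψ) * (1 - R0w), -(μa + ψ) * R0w, -(1 - ρ2) * φw / R0w, φw / R0w;
     ψ / 2, 0, -μwb, 0;
     0, ψ / 2, 0, -μw]

theorem charpoly_jacobianE3 {μa ψ μwb μw φw ρ2 R0w : ℝ}
    (h : φw / R0w * ψ = 2 * μw * (μa + ψ)) :
    (jacobianE3 μa ψ μwb μw φw ρ2 R0w).charpoly =
      (X ^ 2 + C (μw + (μa + ψ) * R0w) * X + C (μw * (μa + ψ) * (R0w - 1))) *
        (X ^ 2 + C (μa + ψ + μwb) * X + C ((μa + ψ) * (μwb - ρ2 * μw))) := by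
  refine Polynomial.funext fun x => ?_
  simp [Matrix.eval_charpoly, jacobianE3, Matrix.det_succ_row_zero, Fin.sum_univ_succ,
    show (Fin.succAbove 2 2 : Fin 4) = 3 from rfl]
  linear_combination (-(x + (μa + ψ)) * (x + μwb) / 2 - ρ2 * (x + (μa + ψ) * R0w) * (x + μw) / 2
    + ρ2 * (φw / R0w * ψ + 2 * μw * (μa + ψ)) / 4) * h

theorem stmt_7_general (μa ψ μwb μw φw ρ2 : ℝ)
    (hμa : 0 < μa) (hψ : 0 < ψ) (hμwb : 0 < μwb) (hμw : 0 < μw)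
    (hφw : 0 < φw)
    (R0w : ℝ)
    (hR0w : R0w = φw * ψ / (2 * μw * (μa + ψ)))
    (J : Matrix (Fin 4) (Fin 4) ℝ)
    (hJ : J = !![-(μa + ψ), 0, ρ2 * φw / R0w, 0;
                 (μa + ψ) * (1 - R0w), -(μa + ψ) * R0w, -(1 - ρ2) * φw / R0w,
                   φw / R0w;
                 ψ / 2, 0, -μwb, 0;
                 0, ψ / 2, 0, -μw])
    (hR : 1 < R0w) (hfit : ρ2 * μw < μwb) :
    ∀ z : ℂ, (J.map (Complex.ofReal)).charpoly.eval z = 0 → z.re < 0 := by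
  intro z hz
  have hA : 0 < μa + ψ := add_pos hμa hψ
  have hK : φw / R0w * ψ = 2 * μw * (μa + ψ) := by
    rw [hR0w]
    field_simp
  have hJE3 : J = jacobianE3 μa ψ μwb μw φw ρ2 R0w := hJ
  rw [show J.map Complex.ofReal = J.map Complex.ofRealHom from rfl, Matrix.charpoly_map, hJE3,
    charpoly_jacobianE3 hK] at hz
  simp only [Polynomial.map_mul, Polynomial.map_add, Polynomial.map_pow, map_X, map_C,
    Complex.ofRealHom_eq_coe, eval_mul, eval_add, eval_pow, eval_X, eval_C] at hz
  rcases mul_eq_zero.1 hz with h | h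
  · exact re_neg_of_sq_add_mul_add_eq_zero (by positivity)
      (mul_pos (mul_pos hμw hA) (sub_pos.2 hR)) h
  · exact re_neg_of_sq_add_mul_add_eq_zero (by positivity) (mul_pos hA (sub_pos.2 hfit)) h

/-- All eigenvalues of `J(E₃)` have negative real parts if `R_{0w} > 1` and
`μ_w̄ > ρ₂ μ_w`. -/
theorem stmt_7 (μa ψ μwb μw φw ρ2 : ℝ)
    (hμa : 0 < μa) (hψ : 0 < ψ) (hμwb : 0 < μwb) (hμw : 0 < μw)
    (hφw : 0 < φw) (hρ2 : ρ2 ∈ Set.Ico (0:ℝ) 1)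
    (R0w : ℝ)
    (hR0w : R0w = φw * ψ / (2 * μw * (μa + ψ)))
    (J : Matrix (Fin 4) (Fin 4) ℝ)
    (hJ : J = !![-(μa + ψ), 0, ρ2 * φw / R0w, 0;
                 (μa + ψ) * (1 - R0w), -(μa + ψ) * R0w, -(1 - ρ2) * φw / R0w,
                   φw / R0w;
                 ψ / 2, 0, -μwb, 0;
                 0, ψ / 2, 0, -μw])
    (hR : 1 < R0w) (hfit : ρ2 * μw < μwb) :
    ∀ z : ℂ, (J.map (Complex.ofReal)).charpoly.eval z = 0 → z.re < 0 :=
  stmt_7_general μa ψ μwb μw φw ρ2 hμa hψ hμwb hμw hφw R0w hR0w J hJ hR hfit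
end

section
/- For the reduced Wolbachia system with ρ₁ = 0 and σ = 0, any solution with non-negative initial conditions (and F_w̄(t)+F_w(t) > 0, Q(0) < K) remains non-negative for all t ≥ 0. -/
/-!
Whenever `Q = K` we have `Q' = -(μa + ψ) K < 0`, so `Q ≤ K` persists and the logistic factor
`1 - Q/K` stays non-negative. On `[0, T]` the `F`'s are bounded above by some `C`, `F_w̄ + F_w` is
bounded below by some `m > 0` and `1 - Q/K` above by some `M`. So if every component is `≥ -δ` and
one of them equals `-δ`, its derivative is `≥ -L δ` with `L = φ_w C M / m + ψ`: the only negative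
contribution to a birth term is the cross term `F_w F_w̄ ≥ -C δ`. A component first reaching the
barrier `-ε e^{(L+1)t}` would do so with slope `≤ -(L+1)δ`, so no component ever reaches it, and
letting `ε → 0` gives non-negativity.
-/

open Set Filter Topology

theorem HasDerivAt.nonpos_of_isMinOn_Icc {f : ℝ → ℝ} {a b d : ℝ} (hab : a < b)
    (hf : HasDerivAt f d b) (hmin : IsMinOn f (Icc a b) b) : d ≤ 0 := by
  have hcone : a - b ∈ posTangentConeAt (Icc a b) b :=
    sub_mem_posTangentConeAt_of_segment_subset (by rw [segment_symm, segment_eq_Icc hab.le])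
  have := hmin.localize.hasFDerivWithinAt_nonneg hf.hasDerivWithinAt.hasFDerivWithinAt hcone
  simp only [ContinuousLinearMap.toSpanSingleton_apply, smul_eq_mul] at this
  nlinarith

section QuasiPositive

variable {ι : Type*} [Finite ι] {x : ι → ℝ → ℝ} {T L : ℝ}

theorem neg_mul_exp_lt_of_quasipositive (hx : ∀ i, ∀ t ∈ Icc 0 T, DifferentiableAt ℝ (x i) t)
    (h0 : ∀ i, 0 ≤ x i 0)
    (hbd : ∀ t ∈ Icc 0 T, ∀ δ > 0, (∀ j, -δ ≤ x j t) → ∀ i, x i t = -δ →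
      -(L * δ) ≤ deriv (x i) t)
    {ε : ℝ} (hε : 0 < ε) : ∀ i, ∀ t ∈ Icc 0 T, -(ε * Real.exp ((L + 1) * t)) < x i t := by
  set b : ℝ → ℝ := fun t => ε * Real.exp ((L + 1) * t) with hb_def
  have hb_pos : ∀ t, 0 < b t := fun t => mul_pos hε (Real.exp_pos _)
  have hb : ∀ t, HasDerivAt b ((L + 1) * b t) t := fun t =>
    (((hasDerivAt_id t).const_mul (L + 1)).exp.const_mul ε).congr_deriv
      (by simp only [hb_def, id, mul_one]; ring)
  have hg : ∀ i, ∀ t ∈ Icc 0 T,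
      HasDerivAt (fun s => x i s + b s) (deriv (x i) t + (L + 1) * b t) t :=
    fun i t ht => (hx i t ht).hasDerivAt.add (hb t)
  have hg_cont : ∀ i, ContinuousOn (fun s => x i s + b s) (Icc 0 T) :=
    fun i t ht => (hg i t ht).continuousAt.continuousWithinAt
  by_contra! hbad
  obtain ⟨i₁, t₁, ht₁, hle₁⟩ := hbad
  set S := ⋃ i, Icc 0 T ∩ (fun s => x i s + b s) ⁻¹' Iic 0
  have hS : IsCompact S := isCompact_Icc.of_isClosed_subset
    (isClosed_iUnion_of_finite fun i => (hg_cont i).preimage_isClosed_of_isClosed isClosed_Icc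
      isClosed_Iic) (iUnion_subset fun i => inter_subset_left)
  obtain ⟨t₀, ht₀S, ht₀_least⟩ := hS.exists_isLeast
    ⟨t₁, mem_iUnion.2 ⟨i₁, ht₁, show x i₁ t₁ + b t₁ ≤ 0 by linarith⟩⟩
  obtain ⟨i, ht₀, hi⟩ := mem_iUnion.1 ht₀S
  have hbefore : ∀ j, ∀ s ∈ Ico 0 t₀, 0 < x j s + b s := fun j s hs => by
    by_contra! h
    exact hs.2.not_ge (ht₀_least (mem_iUnion.2 ⟨j, ⟨hs.1, hs.2.le.trans ht₀.2⟩, h⟩))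
  have ht₀_pos : 0 < t₀ := lt_of_le_of_ne ht₀.1 fun h => by
    rw [← h] at hi
    exact absurd hi (not_le.2 (add_pos_of_nonneg_of_pos (h0 i) (hb_pos 0)))
  have hat : ∀ j, 0 ≤ x j t₀ + b t₀ := fun j =>
    ge_of_tendsto ((hg j t₀ ht₀).continuousAt.tendsto.mono_left nhdsWithin_le_nhds)
      (eventually_of_mem (Ioo_mem_nhdsLT ht₀_pos) fun s hs => (hbefore j s ⟨hs.1.le, hs.2⟩).le)
  have hi₀ : x i t₀ + b t₀ = 0 := le_antisymm hi (hat i)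
  have hslope : deriv (x i) t₀ + (L + 1) * b t₀ ≤ 0 :=
    (hg i t₀ ht₀).nonpos_of_isMinOn_Icc ht₀_pos fun s hs => by
      rcases hs.2.lt_or_eq with h | rfl
      · simpa [hi₀] using (hbefore i s ⟨hs.1, h⟩).le
      · exact le_refl (x i s + b s)
  have := hbd t₀ ht₀ (b t₀) (hb_pos t₀) (fun j => by linarith [hat j]) i (by linarith)
  linarith [hb_pos t₀]

theorem nonneg_of_quasipositive (hx : ∀ i, ∀ t ∈ Icc 0 T, DifferentiableAt ℝ (x i) t)
    (h0 : ∀ i, 0 ≤ x i 0)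
    (hbd : ∀ t ∈ Icc 0 T, ∀ δ > 0, (∀ j, -δ ≤ x j t) → ∀ i, x i t = -δ →
      -(L * δ) ≤ deriv (x i) t) :
    ∀ i, ∀ t ∈ Icc 0 T, 0 ≤ x i t := by
  intro i t ht
  by_contra! hneg
  have hε : 0 < -x i t / Real.exp ((L + 1) * t) := div_pos (by linarith) (Real.exp_pos _)
  have := neg_mul_exp_lt_of_quasipositive hx h0 hbd hε i t ht
  rw [div_mul_cancel₀ _ (Real.exp_ne_zero _), neg_neg] at this
  exact this.false

end QuasiPositive

theorem neg_mul_le_mul_of_neg_le {u v C δ : ℝ} (hC : 0 ≤ C) (hδ : 0 ≤ δ) (hu : -δ ≤ u)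
    (hv : -δ ≤ v) (huC : u ≤ C) (hvC : v ≤ C) : -(C * δ) ≤ u * v := by
  rcases le_total 0 u with hu0 | hu0 <;> rcases le_total 0 v with hv0 | hv0 <;> nlinarith

theorem neg_div_mul_le_div_mul {N S P c m M : ℝ} (hN : -c ≤ N) (hc : 0 ≤ c) (hm : 0 < m)
    (hmS : m ≤ S) (hP : 0 ≤ P) (hPM : P ≤ M) : -(c / m * M) ≤ N / S * P := by
  have hS : 0 < S := hm.trans_le hmS
  have hcm : 0 ≤ c / m := div_nonneg hc hm.le
  rcases le_total 0 N with hN0 | hN0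
  · nlinarith [mul_nonneg (div_nonneg hN0 hS.le) hP]
  · have hNm : -(c / m) ≤ N / m := by rw [← neg_div]; exact div_le_div_of_nonneg_right hN hm.le
    have hNS : N / m ≤ N / S := by rw [div_le_div_iff₀ hm hS]; nlinarith
    nlinarith [mul_le_mul_of_nonneg_right (hNm.trans hNS) hP]

theorem neg_le_birth_death_rate {a b φ u v w S P C m M μ q δ L : ℝ} (ha : 0 ≤ a) (hb : 0 ≤ b)
    (hbφ : b ≤ φ) (hC : 0 ≤ C) (hδ : 0 ≤ δ) (hv : -δ ≤ v) (hw : -δ ≤ w) (hvC : v ≤ C)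
    (hwC : w ≤ C) (hm : 0 < m) (hmS : m ≤ S) (hP : 0 ≤ P) (hPM : P ≤ M) (hμ : 0 ≤ μ)
    (hq : q = -δ) (hL : φ * C * M / m ≤ L) :
    -(L * δ) ≤ (a * u ^ 2 + b * v * w) / S * P - μ * q := by
  have hCδ : 0 ≤ C * δ := mul_nonneg hC hδ
  have hN : -(φ * C * δ) ≤ a * u ^ 2 + b * v * w := by
    nlinarith [mul_nonneg ha (sq_nonneg u), mul_le_mul_of_nonneg_right hbφ hCδ,
      neg_mul_le_mul_of_neg_le hC hδ hv hw hvC hwC]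
  have hbirth := neg_div_mul_le_div_mul hN (by nlinarith) hm hmS hP hPM
  have hLδ : φ * C * δ / m * M ≤ L * δ := by
    calc φ * C * δ / m * M = φ * C * M / m * δ := by ring
      _ ≤ L * δ := mul_le_mul_of_nonneg_right hL hδ
  nlinarith

theorem neg_le_linear_rate {c μ q f δ L : ℝ} (hc : 0 ≤ c) (hcL : c ≤ L) (hμ : 0 ≤ μ)
    (hδ : 0 ≤ δ) (hq : -δ ≤ q) (hf : f = -δ) : -(L * δ) ≤ c * q - μ * f := by
  subst hf
  nlinarith [mul_le_mul_of_nonneg_left hq hc, mul_le_mul_of_nonneg_right hcL hδ]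

/-- Positivity of solutions: for the reduced Wolbachia system with ρ₁ = 0 and
σ = 0, any global solution with non-negative initial conditions (with
`F_w̄ + F_w > 0` throughout and `Q(0) < K`) remains non-negative for all
`t ≥ 0`. -/
theorem stmt_10 (φwb φw ψ μa μwb μw ρ2 K : ℝ)
    (hφwb : 0 < φwb) (hφw : 0 < φw) (hψ : 0 < ψ) (hμa : 0 < μa)
    (hμwb : 0 < μwb) (hμw : 0 < μw) (hK : 0 < K)
    (hρ2 : ρ2 ∈ Set.Icc (0:ℝ) 1)
    (Qwb Qw Fwb Fw : ℝ → ℝ)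
    (hQwb : ∀ t ≥ (0:ℝ), HasDerivAt Qwb
      (((φwb * (Fwb t) ^ 2 + ρ2 * φw * Fw t * Fwb t) / (Fwb t + Fw t))
        * (1 - (Qwb t + Qw t) / K) - (μa + ψ) * Qwb t) t)
    (hQw : ∀ t ≥ (0:ℝ), HasDerivAt Qw
      (((φw * (Fw t) ^ 2 + (1 - ρ2) * φw * Fw t * Fwb t) / (Fwb t + Fw t))
        * (1 - (Qwb t + Qw t) / K) - (μa + ψ) * Qw t) t)
    (hFwb : ∀ t ≥ (0:ℝ), HasDerivAt Fwb ((ψ / 2) * Qwb t - μwb * Fwb t) t)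
    (hFw : ∀ t ≥ (0:ℝ), HasDerivAt Fw ((ψ / 2) * Qw t - μw * Fw t) t)
    (hFpos : ∀ t ≥ (0:ℝ), 0 < Fwb t + Fw t)
    (hQ0 : Qwb 0 + Qw 0 < K)
    (h0 : 0 ≤ Qwb 0 ∧ 0 ≤ Qw 0 ∧ 0 ≤ Fwb 0 ∧ 0 ≤ Fw 0) :
    ∀ t ≥ (0:ℝ), 0 ≤ Qwb t ∧ 0 ≤ Qw t ∧ 0 ≤ Fwb t ∧ 0 ≤ Fw t := by
  obtain ⟨hρ0, hρ1⟩ := hρ2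
  intro T hT
  have hcont {f f' : ℝ → ℝ} (hf : ∀ t ≥ (0:ℝ), HasDerivAt f (f' t) t) :
      ContinuousOn f (Icc 0 T) := fun t ht => (hf t ht.1).continuousAt.continuousWithinAt
  have hQK : ∀ t ∈ Icc 0 T, Qwb t + Qw t ≤ K :=
    image_le_of_deriv_right_lt_deriv_boundary ((hcont hQwb).add (hcont hQw))
      (fun t ht => ((hQwb t ht.1).add (hQw t ht.1)).hasDerivWithinAt) hQ0.le
      (fun _ => hasDerivAt_const _ K) fun t _ hKt => by
        rw [Pi.add_apply] at hKt
        rw [hKt, div_self hK.ne']; nlinarith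
  obtain ⟨C, hC0, hF⟩ : ∃ C ≥ 0, ∀ t ∈ Icc 0 T, Fwb t ≤ C ∧ Fw t ≤ C := by
    obtain ⟨C, hC⟩ := isCompact_Icc.bddAbove_image ((hcont hFwb).sup (hcont hFw))
    have hF t (ht : t ∈ Icc 0 T) := sup_le_iff.1 (hC ⟨t, ht, rfl⟩)
    exact ⟨C, h0.2.2.1.trans (hF 0 (left_mem_Icc.2 hT)).1, hF⟩
  obtain ⟨m, hm, hmS⟩ : ∃ m > 0, ∀ t ∈ Icc 0 T, m ≤ Fwb t + Fw t := by
    obtain ⟨tm, htm, hmin⟩ :=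
      isCompact_Icc.exists_isMinOn (nonempty_Icc.2 hT) ((hcont hFwb).add (hcont hFw))
    exact ⟨_, hFpos tm htm.1, fun t ht => hmin ht⟩
  obtain ⟨M, hM0, hP⟩ : ∃ M ≥ 0, ∀ t ∈ Icc 0 T,
      0 ≤ 1 - (Qwb t + Qw t) / K ∧ 1 - (Qwb t + Qw t) / K ≤ M := by
    obtain ⟨M, hM⟩ := isCompact_Icc.bddAbove_image
      (continuousOn_const.sub (((hcont hQwb).add (hcont hQw)).div_const K))
    have hP t (ht : t ∈ Icc 0 T) : 0 ≤ 1 - (Qwb t + Qw t) / K ∧ 1 - (Qwb t + Qw t) / K ≤ M :=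
      ⟨by rw [sub_nonneg, div_le_one hK]; exact hQK t ht, hM ⟨t, ht, rfl⟩⟩
    exact ⟨M, (hP 0 (left_mem_Icc.2 hT)).1.trans (hP 0 (left_mem_Icc.2 hT)).2, hP⟩
  have hCM : 0 ≤ φw * C * M / m := by positivity
  have key := nonneg_of_quasipositive (x := ![Qwb, Qw, Fwb, Fw]) (L := φw * C * M / m + ψ)
    (fun i t ht => by
      fin_cases i
      exacts [(hQwb t ht.1).differentiableAt, (hQw t ht.1).differentiableAt,
        (hFwb t ht.1).differentiableAt, (hFw t ht.1).differentiableAt])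
    (fun i => by fin_cases i <;> simp [h0])
    (fun t ht δ hδ hall i hi => by
      obtain ⟨hFwbC, hFwC⟩ := hF t ht
      fin_cases i
      · refine le_of_le_of_eq ?_ (hQwb t ht.1).deriv.symm
        exact neg_le_birth_death_rate hφwb.le (mul_nonneg hρ0 hφw.le)
          (mul_le_of_le_one_left hφw.le hρ1) hC0 hδ.le (hall 3) (hall 2) hFwC hFwbC hm
          (hmS t ht) (hP t ht).1 (hP t ht).2 (by linarith) hi (by linarith)
      · refine le_of_le_of_eq ?_ (hQw t ht.1).deriv.symm
        exact neg_le_birth_death_rate hφw.le (mul_nonneg (sub_nonneg.2 hρ1) hφw.le)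
          (mul_le_of_le_one_left hφw.le (by linarith)) hC0 hδ.le (hall 3) (hall 2) hFwC hFwbC
          hm (hmS t ht) (hP t ht).1 (hP t ht).2 (by linarith) hi (by linarith)
      · refine le_of_le_of_eq ?_ (hFwb t ht.1).deriv.symm
        exact neg_le_linear_rate (by linarith) (by linarith) hμwb.le hδ.le (hall 0) hi
      · refine le_of_le_of_eq ?_ (hFw t ht.1).deriv.symm
        exact neg_le_linear_rate (by linarith) (by linarith) hμw.le hδ.le (hall 1) hi)
  exact ⟨key 0 T ⟨hT, le_rfl⟩, key 1 T ⟨hT, le_rfl⟩, key 2 T ⟨hT, le_rfl⟩, key 3 T ⟨hT, le_rfl⟩⟩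
end

section
/- If σ + ρ₂μ_w < μ_w̄(1-ρ₁), then the quadratic B₁x² + B₂x + B₃ (with B₁ = φ_w(σ+ρ₁μ_w), B₂ = (σ+ρ₂μ_w-μ_w̄(1-ρ₁))φ_w, B₃ = (1-R¹)(μ_w+σ)φ_w̄) has two distinct positive real roots whenever R* < R¹ < 1, where R* = 1 - μ_w(σ+ρ₂μ_w-μ_w̄(1-ρ₁))² R_{0w} / (4μ_w̄(μ_w+σ)(σ+ρ₁μ_w) R_{0w̄}) and R¹ = R_{0w}(1-ρ₂)μ_w/(R_{0w̄}(μ_w+σ)). -/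
/-!
Since `σ + ρ₂μ_w < μ_w̄(1-ρ₁)`, the quadratic has positive leading coefficient and negative
linear coefficient, and `R¹ < 1` makes its constant term positive; so both roots, if real, are
positive. After the common factor `ψ / (2(μ_a + ψ))` of `R_{0w}` and `R_{0w̄}` cancels,
`R* < R¹` is exactly the statement that the discriminant is positive.
-/

theorem exists_two_pos_roots_of_discrim_pos {a b c : ℝ} (ha : 0 < a) (hb : b < 0) (hc : 0 < c)
    (hd : 0 < discrim a b c) :
    ∃ x y : ℝ, 0 < x ∧ 0 < y ∧ x ≠ y ∧ a * x ^ 2 + b * x + c = 0 ∧ a * y ^ 2 + b * y + c = 0 := by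
  set s := √(discrim a b c)
  have hs : 0 < s := Real.sqrt_pos.mpr hd
  have hss : discrim a b c = s * s := (Real.mul_self_sqrt hd.le).symm
  have hs_lt : s < -b := by
    have : s * s < b * b := by rw [← hss, discrim]; nlinarith
    nlinarith
  have root (x : ℝ) : x = (-b + s) / (2 * a) ∨ x = (-b - s) / (2 * a) →
      a * x ^ 2 + b * x + c = 0 := by
    rw [sq]; exact (quadratic_eq_zero_iff ha.ne' hss x).mpr
  refine ⟨(-b + s) / (2 * a), (-b - s) / (2 * a), div_pos (by linarith) (by positivity),
    div_pos (by linarith) (by positivity), ?_, root _ (.inl rfl), root _ (.inr rfl)⟩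
  rw [Ne, div_left_inj' (by positivity)]
  linarith

theorem reproduction_number_ratio {φw φwb μw μwb ψ μa : ℝ} (hμw : 0 < μw) (hμwb : 0 < μwb)
    (hψ : 0 < ψ) (hμa : 0 < μa) :
    φw * ψ / (2 * μw * (μa + ψ)) / (φwb * ψ / (2 * μwb * (μa + ψ))) =
      φw * μwb / (φwb * μw) := by
  have : 0 < μa + ψ := by linarith
  field_simp

theorem discrim_pos_of_threshold_lt {φw φwb σ μw μwb ψ μa ρ1 k R1 : ℝ}
    (hφw : 0 < φw) (hφwb : 0 < φwb) (hσ : 0 < σ) (hμw : 0 < μw) (hμwb : 0 < μwb)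
    (hψ : 0 < ψ) (hμa : 0 < μa) (hρ1 : 0 ≤ ρ1)
    (hlo : 1 - μw * k ^ 2 * (φw * ψ / (2 * μw * (μa + ψ))) /
      (4 * μwb * (μw + σ) * (σ + ρ1 * μw) * (φwb * ψ / (2 * μwb * (μa + ψ)))) < R1) :
    0 < discrim (φw * (σ + ρ1 * μw)) (k * φw) ((1 - R1) * (μw + σ) * φwb) := by
  have threshold : μw * k ^ 2 * (φw * ψ / (2 * μw * (μa + ψ))) /
      (4 * μwb * (μw + σ) * (σ + ρ1 * μw) * (φwb * ψ / (2 * μwb * (μa + ψ)))) =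
      k ^ 2 * φw / (4 * φwb * (μw + σ) * (σ + ρ1 * μw)) := by
    rw [mul_div_assoc, mul_comm (4 * μwb * (μw + σ) * (σ + ρ1 * μw)), ← div_div,
      reproduction_number_ratio hμw hμwb hψ hμa]
    field_simp
  rw [threshold, sub_lt_comm, lt_div_iff₀ (by positivity)] at hlo
  rw [discrim]
  nlinarith [mul_lt_mul_of_pos_left hlo hφw]

theorem stmt_19_general (φw φwb σ μw μwb ψ μa ρ1 ρ2 : ℝ)
    (hφw : 0 < φw) (hφwb : 0 < φwb) (hσ : 0 < σ) (hμw : 0 < μw) (hμwb : 0 < μwb)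
    (hψ : 0 < ψ) (hμa : 0 < μa)
    (hρ1 : ρ1 ∈ Set.Icc (0:ℝ) 1)
    (R0w R0wb R1 Rstar B1 B2 B3 : ℝ)
    (hR0w : R0w = φw * ψ / (2 * μw * (μa + ψ)))
    (hR0wb : R0wb = φwb * ψ / (2 * μwb * (μa + ψ)))
    (hRstar : Rstar = 1 - μw * (σ + ρ2 * μw - μwb * (1 - ρ1)) ^ 2 * R0w /
      (4 * μwb * (μw + σ) * (σ + ρ1 * μw) * R0wb))
    (hB1 : B1 = φw * (σ + ρ1 * μw))
    (hB2 : B2 = (σ + ρ2 * μw - μwb * (1 - ρ1)) * φw)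
    (hB3 : B3 = (1 - R1) * (μw + σ) * φwb)
    (hcond : σ + ρ2 * μw < μwb * (1 - ρ1))
    (hlo : Rstar < R1) (hhi : R1 < 1) :
    ∃ x y : ℝ, 0 < x ∧ 0 < y ∧ x ≠ y ∧
      B1 * x ^ 2 + B2 * x + B3 = 0 ∧ B1 * y ^ 2 + B2 * y + B3 = 0 := by
  subst hR0w hR0wb hRstar hB1 hB2 hB3
  obtain ⟨hρ1, -⟩ := hρ1
  apply exists_two_pos_roots_of_discrim_pos
  · have : 0 < σ + ρ1 * μw := by positivity
    positivity
  · exact mul_neg_of_neg_of_pos (by linarith) hφw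
  · have : 0 < 1 - R1 := by linarith
    positivity
  · exact discrim_pos_of_threshold_lt hφw hφwb hσ hμw hμwb hψ hμa hρ1 hlo

/-- Backward bifurcation regime: when `σ + ρ₂μ_w < μ_w̄(1-ρ₁)` and
`R* < R¹ < 1`, the quadratic has two distinct positive real roots. -/
theorem stmt_19 (φw φwb σ μw μwb ψ μa ρ1 ρ2 : ℝ)
    (hφw : 0 < φw) (hφwb : 0 < φwb) (hσ : 0 < σ) (hμw : 0 < μw) (hμwb : 0 < μwb)
    (hψ : 0 < ψ) (hμa : 0 < μa)
    (hρ1 : ρ1 ∈ Set.Icc (0:ℝ) 1) (hρ2 : ρ2 ∈ Set.Icc (0:ℝ) 1)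
    (R0w R0wb R1 Rstar B1 B2 B3 : ℝ)
    (hR0w : R0w = φw * ψ / (2 * μw * (μa + ψ)))
    (hR0wb : R0wb = φwb * ψ / (2 * μwb * (μa + ψ)))
    (hR1 : R1 = R0w * (1 - ρ2) * μw / (R0wb * (μw + σ)))
    (hRstar : Rstar = 1 - μw * (σ + ρ2 * μw - μwb * (1 - ρ1)) ^ 2 * R0w /
      (4 * μwb * (μw + σ) * (σ + ρ1 * μw) * R0wb))
    (hB1 : B1 = φw * (σ + ρ1 * μw))
    (hB2 : B2 = (σ + ρ2 * μw - μwb * (1 - ρ1)) * φw)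
    (hB3 : B3 = (1 - R1) * (μw + σ) * φwb)
    (hcond : σ + ρ2 * μw < μwb * (1 - ρ1))
    (hlo : Rstar < R1) (hhi : R1 < 1) :
    ∃ x y : ℝ, 0 < x ∧ 0 < y ∧ x ≠ y ∧
      B1 * x ^ 2 + B2 * x + B3 = 0 ∧ B1 * y ^ 2 + B2 * y + B3 = 0 :=
  stmt_19_general φw φwb σ μw μwb ψ μa ρ1 ρ2 hφw hφwb hσ hμw hμwb hψ hμa hρ1 R0w R0wb R1 Rstar B1 B2
    B3 hR0w hR0wb hRstar hB1 hB2 hB3 hcond hlo hhi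
end
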